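/- Let i ≠ j be indices in {1, …, n}. Suppose α, β : {p_1, …, p_n} → ℚ[G] are such that r(p_k,p_l) = α(p_k)(e − p_l) + β(p_l)(e − p_k) ∈ ℤ[G] for all k, l = 1, …, n (i.e. the element r = Σ_{k,l} r(p_k,p_l) ⊗ p_k ⊗ p_l of M_ℚ(A,B) lies in M(A,B)). Then there exists t ∈ ℚ such that (α(p_i) + β(p_i))(e − p_j) − tN ∈ ℤ[G], and every such t satisfies t·m_i ∈ ℤ and t·m_j ∈ ℤ (hence t·gcd(m_i,m_j) ∈ ℤ). -/

import Mathlib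

open MonoidAlgebra Finset

/-- The integral group ring ℤ[G]. -/
noncomputable abbrev ZG (G : Type) [CommGroup G] := MonoidAlgebra ℤ G

/-- The rational group ring ℚ[G]. -/
noncomputable abbrev QG (G : Type) [CommGroup G] := MonoidAlgebra ℚ G

/-- The canonical embedding ℤ[G] → ℚ[G]. -/
noncomputable def toQ (G : Type) [CommGroup G] : ZG G →ₐ[ℤ] QG G :=
  MonoidAlgebra.lift ℤ (QG G) G (MonoidAlgebra.of ℚ G)

/-- "x ∈ ℤ[G]" for an element x of ℚ[G]. -/
def MemZG (G : Type) [CommGroup G] (x : QG G) : Prop := ∃ z : ZG G, toQ G z = x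

/-- G = ℤ_{m₁} × ℤ_{m₂} × ⋯ × ℤ_{mₙ}, written multiplicatively. -/
abbrev Gr {n : ℕ} (m : Fin n → ℕ) : Type := (i : Fin n) → Multiplicative (ZMod (m i))

/-- pᵢ, the generator of the i-th factor of G. -/
def pgen {n : ℕ} (m : Fin n → ℕ) (i : Fin n) : Gr m :=
  Pi.mulSingle i (Multiplicative.ofAdd 1)

/-- Pᵢ = e + pᵢ + pᵢ² + ⋯ + pᵢ^{mᵢ−1} ∈ ℤ[G]. -/
noncomputable def Pel {n : ℕ} (m : Fin n → ℕ) (i : Fin n) : ZG (Gr m) :=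
  ∑ k ∈ Finset.range (m i), (MonoidAlgebra.of ℤ (Gr m) (pgen m i)) ^ k

/-- Qᵢ = ∏_{j ≠ i} Pⱼ ∈ ℤ[G]. -/
noncomputable def Qel {n : ℕ} (m : Fin n → ℕ) (i : Fin n) : ZG (Gr m) :=
  ∏ j ∈ Finset.univ.erase i, Pel m j

/-- N = Σ_{g ∈ G} g ∈ ℤ[G]. -/
noncomputable def Nel {n : ℕ} (m : Fin n → ℕ) [∀ i, NeZero (m i)] : ZG (Gr m) :=
  ∑ g : Gr m, MonoidAlgebra.of ℤ (Gr m) g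

/-!
Write `κ = (α(pᵢ) + β(pᵢ))(e − pⱼ)`. The identity
`(e − pₖ)κ = (e − pⱼ) r(pᵢ,pₖ) − (e − pᵢ) r(pⱼ,pₖ) + (e − pₖ) r(pⱼ,pᵢ)`
puts `(e − pₖ)κ` in `ℤ[G]` for every generator, hence `(e − g)κ ∈ ℤ[G]` for all `g ∈ G`, since
such `g` form a subgroup. So every coefficient of `κ` agrees with `κ(e)` modulo `ℤ`, and `t = κ(e)`
works. Conversely, if `κ − tN ∈ ℤ[G]`, multiplying by `Pₖ` and using `Pₖ N = mₖ N` gives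
`Pₖ κ − t mₖ N ∈ ℤ[G]`; and `Pₖ κ ∈ ℤ[G]` for `k = i, j` because `Pₖ (e − pₖ) = 0`
(for `k = i` write `κ = r(pᵢ,pⱼ) + r(pⱼ,pᵢ) − (e − pᵢ)(α(pⱼ) + β(pⱼ))`).
-/

section Kappa

variable {R ι S : Type*} [CommRing R] [SetLike S R] [SubringClass S R] {Z : S} {u α β : ι → R}

theorem mul_kappa_mem (hu : ∀ k, u k ∈ Z) (h : ∀ k l, α k * u l + β l * u k ∈ Z) (i j k : ι) :
    u k * ((α i + β i) * u j) ∈ Z := by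
  have key : u k * ((α i + β i) * u j)
      = u j * (α i * u k + β k * u i) - u i * (α j * u k + β k * u j)
        + u k * (α j * u i + β i * u j) := by ring
  rw [key]
  exact add_mem (sub_mem (mul_mem (hu j) (h i k)) (mul_mem (hu i) (h j k)))
    (mul_mem (hu k) (h j i))

theorem mul_kappa_mem_of_mul_eq_zero (h : ∀ k l, α k * u l + β l * u k ∈ Z) {v : R} (hv : v ∈ Z)
    {i : ι} (hvi : v * u i = 0) (j : ι) : v * ((α i + β i) * u j) ∈ Z := by
  have key : v * ((α i + β i) * u j)
      = v * ((α i * u j + β j * u i) + (α j * u i + β i * u j)) - v * u i * (α j + β j) := by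
    ring
  rw [key, hvi, zero_mul, sub_zero]
  exact mul_mem hv (add_mem (h i j) (h j i))

end Kappa

section GroupRing

variable {G : Type} [CommGroup G]

theorem memZG_iff_mem_range {x : QG G} : MemZG G x ↔ x ∈ (toQ G).range := Iff.rfl

theorem toQ_of (g : G) : toQ G (of ℤ G g) = of ℚ G g := by
  rw [toQ, lift_of]

theorem memZG_of (g : G) : MemZG G (of ℚ G g) := ⟨of ℤ G g, toQ_of g⟩

theorem toQ_single (g : G) (a : ℤ) : toQ G (single g a) = single g (a : ℚ) := by
  rw [toQ, lift_single, of_apply, smul_single, zsmul_eq_mul, mul_one]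

theorem toQ_eq_map (z : ZG G) : toQ G z = map (Int.castAddHom ℚ) z := by
  induction z using induction_linear with
  | zero => rw [map_zero, MonoidAlgebra.map_zero]
  | add x y hx hy => rw [map_add, hx, hy, MonoidAlgebra.map_add]
  | single g a => rw [toQ_single, map_single, Int.coe_castAddHom]

theorem memZG_iff_coeff {x : QG G} : MemZG G x ↔ ∀ g, ∃ a : ℤ, (a : ℚ) = x.coeff g := by
  simp only [MemZG, toQ_eq_map, ← Set.mem_range, range_map, Int.coe_castAddHom]
  rfl

theorem coeff_one_sub_of_mul_self (x : QG G) (g : G) :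
    ((1 - of ℚ G g) * x).coeff g = x.coeff g - x.coeff 1 := by
  rw [sub_mul, one_mul, coeff_sub, Finsupp.sub_apply, of_apply, coeff_single_mul_apply,
    inv_mul_cancel, one_mul]

theorem memZG_one_sub_of_mul_of_closure_eq_top {s : Set G} (hs : Subgroup.closure s = ⊤)
    {x : QG G} (hx : ∀ g ∈ s, MemZG G ((1 - of ℚ G g) * x)) (g : G) :
    MemZG G ((1 - of ℚ G g) * x) := by
  simp only [memZG_iff_mem_range] at hx ⊢
  have hg : g ∈ Subgroup.closure s := hs ▸ Subgroup.mem_top g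
  induction hg using Subgroup.closure_induction with
  | mem g hg => exact hx g hg
  | one => rw [map_one, sub_self, zero_mul]; exact zero_mem (toQ G).range
  | mul g h _ _ hg hh =>
    have key : (1 - of ℚ G (g * h)) * x
        = (1 - of ℚ G g) * x + of ℚ G g * ((1 - of ℚ G h) * x) := by
      rw [map_mul]; ring
    rw [key]
    exact add_mem hg (mul_mem (memZG_of g) hh)
  | inv g _ hg =>
    have hinv : of ℚ G g⁻¹ * of ℚ G g = 1 := by rw [← map_mul, inv_mul_cancel, map_one]
    have key : (1 - of ℚ G g⁻¹) * x = -(of ℚ G g⁻¹ * ((1 - of ℚ G g) * x)) := by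
      linear_combination (-x) * hinv
    rw [key]
    exact neg_mem (mul_mem (memZG_of g⁻¹) hg)

variable [Fintype G]

theorem of_mul_sum_of (g : G) : of ℚ G g * ∑ h, of ℚ G h = ∑ h, of ℚ G h := by
  simp only [mul_sum, ← map_mul]
  exact Fintype.sum_equiv (Equiv.mulLeft g) _ _ fun _ => rfl

theorem coeff_sum_of (g : G) : (∑ h, of ℚ G h).coeff g = 1 := by
  simp [coeff_sum, of_apply]

theorem coeff_sub_smul_sum_of (x : QG G) (t : ℚ) (g : G) :
    (x - t • ∑ h, of ℚ G h).coeff g = x.coeff g - t := by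
  rw [coeff_sub, Finsupp.sub_apply, coeff_smul_apply, coeff_sum_of, smul_eq_mul, mul_one]

theorem memZG_sub_coeff_one_smul_sum_of {x : QG G} (hx : ∀ g, MemZG G ((1 - of ℚ G g) * x)) :
    MemZG G (x - x.coeff 1 • ∑ h, of ℚ G h) := by
  refine memZG_iff_coeff.2 fun g => ?_
  rw [coeff_sub_smul_sum_of, ← coeff_one_sub_of_mul_self]
  exact memZG_iff_coeff.1 (hx g) g

theorem exists_int_eq_mul_of_geom_sum_mul_memZG {x : QG G} {t : ℚ}
    (hx : MemZG G (x - t • ∑ h, of ℚ G h)) {g : G} {K : ℕ}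
    (hK : MemZG G ((∑ k ∈ range K, of ℚ G g ^ k) * x)) : ∃ a : ℤ, t * K = a := by
  simp only [memZG_iff_mem_range] at hx hK
  have hyN : (∑ k ∈ range K, of ℚ G g ^ k) * ∑ h, of ℚ G h = (K : ℚ) • ∑ h, of ℚ G h := by
    simp only [sum_mul, ← map_pow, of_mul_sum_of, sum_const, card_range, Nat.cast_smul_eq_nsmul]
  have hy : ∑ k ∈ range K, of ℚ G g ^ k ∈ (toQ G).range :=
    sum_mem fun k _ => pow_mem (memZG_of g) k
  have htK : MemZG G ((t * K) • ∑ h, of ℚ G h) := by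
    have key : (t * K) • ∑ h, of ℚ G h = (∑ k ∈ range K, of ℚ G g ^ k) * x
        - (∑ k ∈ range K, of ℚ G g ^ k) * (x - t • ∑ h, of ℚ G h) := by
      rw [mul_sub, mul_smul_comm, hyN, smul_smul, sub_sub_cancel, mul_comm]
    rw [key]
    exact sub_mem hK (mul_mem hy hx)
  obtain ⟨a, ha⟩ := memZG_iff_coeff.1 htK 1
  rw [coeff_smul_apply, coeff_sum_of, smul_eq_mul, mul_one] at ha
  exact ⟨a, ha.symm⟩

end GroupRing

theorem exists_int_eq_mul_gcd {t : ℚ} {a b : ℕ} (ha : ∃ z : ℤ, t * a = z)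
    (hb : ∃ z : ℤ, t * b = z) : ∃ z : ℤ, t * Nat.gcd a b = z := by
  obtain ⟨A, hA⟩ := ha
  obtain ⟨B, hB⟩ := hb
  refine ⟨A * Nat.gcdA a b + B * Nat.gcdB a b, ?_⟩
  have hbez : ((Nat.gcd a b : ℤ) : ℚ) = a * Nat.gcdA a b + b * Nat.gcdB a b := by
    exact_mod_cast Nat.gcd_eq_gcd_ab a b
  push_cast at hbez ⊢
  rw [hbez]
  linear_combination (Nat.gcdA a b : ℚ) * hA + (Nat.gcdB a b : ℚ) * hB

section Generators

variable {n : ℕ} (m : Fin n → ℕ)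

theorem mulSingle_eq_pgen_pow (i : Fin n) (a : Multiplicative (ZMod (m i))) :
    Pi.mulSingle i a = pgen m i ^ (ZMod.cast a.toAdd : ℤ) := by
  rw [pgen, ← Pi.mulSingle_zpow, ← ofAdd_zsmul, zsmul_one, ZMod.intCast_zmod_cast, ofAdd_toAdd]

theorem pgen_pow_self (i : Fin n) : pgen m i ^ m i = 1 := by
  rw [pgen, ← Pi.mulSingle_pow, ← ofAdd_nsmul, nsmul_one, ZMod.natCast_self, ofAdd_zero,
    Pi.mulSingle_one]

theorem closure_range_pgen : Subgroup.closure (Set.range (pgen m)) = ⊤ := by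
  refine (Subgroup.eq_top_iff' _).2 fun g => ?_
  rw [← Finset.univ_prod_mulSingle g]
  refine Subgroup.prod_mem _ fun i _ => ?_
  rw [mulSingle_eq_pgen_pow]
  exact zpow_mem (Subgroup.subset_closure (Set.mem_range_self i)) _

theorem geom_sum_pgen_mul_one_sub (i : Fin n) :
    (∑ k ∈ range (m i), of ℚ (Gr m) (pgen m i) ^ k) * (1 - of ℚ (Gr m) (pgen m i)) = 0 := by
  rw [geom_sum_mul_neg, ← map_pow, pgen_pow_self, map_one, sub_self]

theorem toQ_Nel [∀ i, NeZero (m i)] : toQ (Gr m) (Nel m) = ∑ g, of ℚ (Gr m) g := by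
  simp only [Nel, map_sum, toQ_of]

end Generators

theorem statement10_general
    (n : ℕ) (m : Fin n → ℕ) [∀ i, NeZero (m i)]
    (i j : Fin n)
    (α β : Fin n → QG (Gr m))
    (h : ∀ k l, MemZG (Gr m)
      (α k * (1 - MonoidAlgebra.of ℚ (Gr m) (pgen m l))
        + β l * (1 - MonoidAlgebra.of ℚ (Gr m) (pgen m k)))) :
    (∃ t : ℚ, MemZG (Gr m)
      ((α i + β i) * (1 - MonoidAlgebra.of ℚ (Gr m) (pgen m j))
        - t • toQ (Gr m) (Nel m)))
    ∧
    ∀ t : ℚ, MemZG (Gr m)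
      ((α i + β i) * (1 - MonoidAlgebra.of ℚ (Gr m) (pgen m j))
        - t • toQ (Gr m) (Nel m)) →
      (∃ a : ℤ, t * (m i : ℚ) = (a : ℚ)) ∧ (∃ a : ℤ, t * (m j : ℚ) = (a : ℚ))
        ∧ (∃ a : ℤ, t * (Nat.gcd (m i) (m j) : ℚ) = (a : ℚ)) := by
  let Z := (toQ (Gr m)).range
  have hu : ∀ k, 1 - of ℚ (Gr m) (pgen m k) ∈ Z := fun k => sub_mem (one_mem Z) (memZG_of _)
  have hgen : ∀ g, MemZG (Gr m)
      ((1 - of ℚ (Gr m) g) * ((α i + β i) * (1 - of ℚ (Gr m) (pgen m j)))) :=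
    memZG_one_sub_of_mul_of_closure_eq_top (closure_range_pgen m)
      (by rintro _ ⟨k, rfl⟩; exact mul_kappa_mem hu h i j k)
  rw [toQ_Nel]
  refine ⟨⟨_, memZG_sub_coeff_one_smul_sum_of hgen⟩, fun t ht => ?_⟩
  have hPi : ∑ k ∈ range (m i), of ℚ (Gr m) (pgen m i) ^ k ∈ Z :=
    sum_mem fun k _ => pow_mem (memZG_of _) k
  have hmi := exists_int_eq_mul_of_geom_sum_mul_memZG ht
    (mul_kappa_mem_of_mul_eq_zero (Z := Z) h hPi (geom_sum_pgen_mul_one_sub m i) j)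
  have hmj := exists_int_eq_mul_of_geom_sum_mul_memZG ht (g := pgen m j) (K := m j) (by
    rw [mul_left_comm, geom_sum_pgen_mul_one_sub, mul_zero]
    exact zero_mem Z)
  exact ⟨hmi, hmj, exists_int_eq_mul_gcd hmi hmj⟩

/-- Existence of t ∈ ℚ with κ_{i,j}(r) − tN ∈ ℤ[G], for i ≠ j and r ∈ ρ⁻¹(T(N(A,B))) given
by a representation r(pₖ,pₗ) = α(pₖ)(e − pₗ) + β(pₗ)(e − pₖ) ∈ ℤ[G]; moreover any such t
satisfies t·mᵢ ∈ ℤ and t·mⱼ ∈ ℤ (hence t·gcd(mᵢ,mⱼ) ∈ ℤ). -/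
theorem statement10
    (n : ℕ) (hn : 1 ≤ n) (m : Fin n → ℕ) [∀ i, NeZero (m i)]
    (i j : Fin n) (hij : i ≠ j)
    (α β : Fin n → QG (Gr m))
    (h : ∀ k l, MemZG (Gr m)
      (α k * (1 - MonoidAlgebra.of ℚ (Gr m) (pgen m l))
        + β l * (1 - MonoidAlgebra.of ℚ (Gr m) (pgen m k)))) :
    (∃ t : ℚ, MemZG (Gr m)
      ((α i + β i) * (1 - MonoidAlgebra.of ℚ (Gr m) (pgen m j))
        - t • toQ (Gr m) (Nel m)))
    ∧
    ∀ t : ℚ, MemZG (Gr m)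
      ((α i + β i) * (1 - MonoidAlgebra.of ℚ (Gr m) (pgen m j))
        - t • toQ (Gr m) (Nel m)) →
      (∃ a : ℤ, t * (m i : ℚ) = (a : ℚ)) ∧ (∃ a : ℤ, t * (m j : ℚ) = (a : ℚ))
        ∧ (∃ a : ℤ, t * (Nat.gcd (m i) (m j) : ℚ) = (a : ℚ)) :=
  statement10_general n m i j α β h
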